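/- For positive integers i ≤ j ≤ k ≤ l, let H^{(4)}_{i,j,k,l} (a 4-dagger) be the 4-uniform hypergraph obtained by attaching loose paths of lengths i, j, k and l to the four vertices of a single edge (one path at each vertex, the paths otherwise pairwise disjoint and disjoint from the central edge). Then each of the hypergraphs H^{(4)}_{2,2,2,2}, H^{(4)}_{1,2,2,4}, H^{(4)}_{1,2,3,3}, H^{(4)}_{1,1,5,5} and H^{(4)}_{1,1,4,6} has spectral radius strictly greater than 6·(2+√5)^{1/4}. -/

import Mathlib

open Finset

/-- A hypergraph on vertex type `V`, given by its finite set of edges. -/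
structure Hypergraph' (V : Type) [DecidableEq V] where
  edges : Finset (Finset V)

namespace Hypergraph'

variable {V : Type} [DecidableEq V]

/-- The vertex set of `H`: all vertices lying in some edge. -/
def vertexSet (H : Hypergraph' V) : Finset V := H.edges.biUnion id

/-- `H` is `r`-uniform: every edge has exactly `r` vertices. -/
def IsUniform (H : Hypergraph' V) (r : ℕ) : Prop := ∀ e ∈ H.edges, e.card = r

/-- The degree of a vertex: the number of edges containing it. -/
def degree (H : Hypergraph' V) (v : V) : ℕ := (H.edges.filter fun e => v ∈ e).card

/-- The spectral radius of an `r`-uniform hypergraph `H`: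
`ρ(H) = r! · max{ (∑_{e ∈ E} ∏_{v ∈ e} x_v) / (∑_v x_v ^ r) : x ≥ 0, x ≠ 0 }`. -/
noncomputable def spectralRadius (H : Hypergraph' V) (r : ℕ) : ℝ :=
  (Nat.factorial r : ℝ) *
    sSup {t : ℝ | ∃ x : V → ℝ, (∀ v, 0 ≤ x v) ∧ (∃ v ∈ H.vertexSet, x v ≠ 0) ∧
      t = (∑ e ∈ H.edges, ∏ v ∈ e, x v) / (∑ v ∈ H.vertexSet, x v ^ r)}

/-- `v, e` form a walk `v 0, e 0, v 1, e 1, …, e (l-1), v l` in `H`. -/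
def IsWalkSeq (H : Hypergraph' V) {l : ℕ} (v : Fin (l + 1) → V) (e : Fin l → Finset V) : Prop :=
  ∀ i : Fin l, e i ∈ H.edges ∧ v i.castSucc ∈ e i ∧ v i.succ ∈ e i

/-- `H` is connected: every two vertices are joined by a walk. -/
def Connected (H : Hypergraph' V) : Prop :=
  ∀ u ∈ H.vertexSet, ∀ w ∈ H.vertexSet,
    ∃ (l : ℕ) (v : Fin (l + 1) → V) (e : Fin l → Finset V),
      H.IsWalkSeq v e ∧ v 0 = u ∧ v (Fin.last l) = w

/-- The cyclic successor on `Fin l`. -/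
def cyc {l : ℕ} (i : Fin l) : Fin l := ⟨((i : ℕ) + 1) % l, Nat.mod_lt _ i.pos⟩

/-- `v, e` form a cycle `v 0, e 0, v 1, e 1, …, e (l-1), v 0` of length `l` in `H`,
with all vertices and all edges distinct. -/
def IsCycleSeq (H : Hypergraph' V) {l : ℕ} (v : Fin l → V) (e : Fin l → Finset V) : Prop :=
  Function.Injective v ∧ Function.Injective e ∧
    ∀ i : Fin l, e i ∈ H.edges ∧ v i ∈ e i ∧ v (cyc i) ∈ e i

/-- `H` contains a cycle. -/
def HasCycle (H : Hypergraph' V) : Prop :=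
  ∃ l : ℕ, 2 ≤ l ∧ ∃ (v : Fin l → V) (e : Fin l → Finset V), H.IsCycleSeq v e

/-- A hypertree: connected and acyclic. -/
def IsHypertree (H : Hypergraph' V) : Prop := H.Connected ∧ ¬H.HasCycle

/-- `H` is irreducible: some edge has all of its vertices of degree at least `2`. -/
def Irreducible (H : Hypergraph' V) : Prop := ∃ e ∈ H.edges, ∀ v ∈ e, 2 ≤ H.degree v

/-- `g` encodes a loose path: consecutive edges meet in exactly one vertex and
non-consecutive edges are disjoint. -/
def IsLoosePathSeq {m : ℕ} (g : Fin m → Finset V) : Prop :=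
  (∀ i j : Fin m, (i : ℕ) + 1 = (j : ℕ) → (g i ∩ g j).card = 1) ∧
    ∀ i j : Fin m, (i : ℕ) + 1 < (j : ℕ) → g i ∩ g j = ∅

/-- The set of vertices covered by a family of edges. -/
def pathVerts {m : ℕ} (g : Fin m → Finset V) : Finset V := Finset.univ.biUnion g

/-- A loose path of edges of `H`, attached to the edge `e0` at the vertex `a`:
`a` is an end vertex of the first edge of the path, and the path meets `e0` only in `a`. -/
def IsAttachedPath (H : Hypergraph' V) (e0 : Finset V) (a : V) {m : ℕ}
    (g : Fin m → Finset V) : Prop :=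
  IsLoosePathSeq g ∧ (∀ j, g j ∈ H.edges) ∧ (∀ j, g j ≠ e0) ∧
    pathVerts g ∩ e0 = {a} ∧ ∀ j : Fin m, a ∈ g j ↔ (j : ℕ) = 0

/-- A path in `H`: a walk with all vertices and all edges distinct. -/
def IsPathSeq (H : Hypergraph' V) {l : ℕ} (v : Fin (l + 1) → V) (e : Fin l → Finset V) : Prop :=
  H.IsWalkSeq v e ∧ Function.Injective v ∧ Function.Injective e

/-- The 4-dagger `H^{(4)}_{i,j,k,l}` : a single (central) 4-edge with loose paths of
lengths `i`, `j`, `k`, `l` attached to its four vertices, the paths otherwise pairwise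
disjoint and disjoint from the central edge. -/
def IsDagger4 (H : Hypergraph' V) (i j k l : ℕ) : Prop :=
  H.IsUniform 4 ∧
    ∃ (a : Fin 4 → V) (g₁ : Fin i → Finset V) (g₂ : Fin j → Finset V)
      (g₃ : Fin k → Finset V) (g₄ : Fin l → Finset V),
      Function.Injective a ∧ Finset.univ.image a ∈ H.edges ∧
      H.IsAttachedPath (Finset.univ.image a) (a 0) g₁ ∧
      H.IsAttachedPath (Finset.univ.image a) (a 1) g₂ ∧
      H.IsAttachedPath (Finset.univ.image a) (a 2) g₃ ∧
      H.IsAttachedPath (Finset.univ.image a) (a 3) g₄ ∧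
      pathVerts g₁ ∩ pathVerts g₂ = ∅ ∧ pathVerts g₁ ∩ pathVerts g₃ = ∅ ∧
      pathVerts g₁ ∩ pathVerts g₄ = ∅ ∧ pathVerts g₂ ∩ pathVerts g₃ = ∅ ∧
      pathVerts g₂ ∩ pathVerts g₄ = ∅ ∧ pathVerts g₃ ∩ pathVerts g₄ = ∅ ∧
      ∀ f ∈ H.edges, f = Finset.univ.image a ∨ (∃ t, g₁ t = f) ∨ (∃ t, g₂ t = f) ∨
        (∃ t, g₃ t = f) ∨ ∃ t, g₄ t = f

end Hypergraph'

open Hypergraph'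

namespace DaggerAux

open Hypergraph'

variable {V : Type} [DecidableEq V]

/-- The forward joint of edge `t` of a loose path: `g t ∩ g (t+1)` (empty for the last edge). -/
def Jset {m : ℕ} (g : Fin m → Finset V) (t : Fin m) : Finset V :=
  if h : (t : ℕ) + 1 < m then g t ∩ g ⟨(t : ℕ) + 1, h⟩ else ∅

/-- The pendant vertices of edge `t`: those in no other edge and different from `c`. -/
def Pset {m : ℕ} (g : Fin m → Finset V) (c : V) (t : Fin m) : Finset V :=
  g t \ insert c ((Finset.univ.filter fun s => s ≠ t).biUnion g)

/-- The path weight function. -/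
def pwt {m : ℕ} (g : Fin m → Finset V) (c : V) (y z : Fin m → ℝ) (v : V) : ℝ :=
  ∑ t, ((if v ∈ Jset g t then y t else 0) + (if v ∈ Pset g c t then z t else 0))

section Path

variable {m : ℕ} {g : Fin m → Finset V} {c : V}

lemma sep (hL : IsLoosePathSeq g) {s t : Fin m} (h : (s : ℕ) + 1 < (t : ℕ)) :
    g s ∩ g t = ∅ := hL.2 s t h

lemma mem_two (hL : IsLoosePathSeq g) {v : V} {s t : Fin m} (hs : v ∈ g s) (ht : v ∈ g t)
    (hst : (s : ℕ) < (t : ℕ)) : (s : ℕ) + 1 = (t : ℕ) := by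
  by_contra h
  have h2 : (s : ℕ) + 1 < (t : ℕ) := by omega
  have := sep hL h2
  have : v ∈ g s ∩ g t := Finset.mem_inter.2 ⟨hs, ht⟩
  simp_all

lemma g_inj (hL : IsLoosePathSeq g) (hcard : ∀ t, (g t).card = 4) :
    Function.Injective g := by
  have key : ∀ s t : Fin m, (s : ℕ) < (t : ℕ) → g s ≠ g t := by
    intro s t hst heq
    have h4 : (g s).card = 4 := hcard s
    have hne : (g s).Nonempty := Finset.card_pos.1 (by omega)
    obtain ⟨v, hv⟩ := hne
    have h1 : (s : ℕ) + 1 = (t : ℕ) := mem_two hL hv (heq ▸ hv) hst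
    have := hL.1 s t h1
    rw [heq, Finset.inter_self] at this
    rw [heq] at h4
    omega
  intro s t heq
  rcases lt_trichotomy (s : ℕ) (t : ℕ) with h | h | h
  · exact absurd heq (key s t h)
  · exact Fin.ext h
  · exact absurd heq.symm (key t s h)

lemma Jset_subset (t : Fin m) : Jset g t ⊆ g t := by
  unfold Jset; split
  · exact Finset.inter_subset_left
  · simp

lemma Pset_subset (t : Fin m) : Pset g c t ⊆ g t := Finset.sdiff_subset

lemma mem_Jset {v : V} {t : Fin m} (hv : v ∈ Jset g t) :
    ∃ h : (t : ℕ) + 1 < m, v ∈ g t ∧ v ∈ g ⟨(t : ℕ) + 1, h⟩ := by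
  unfold Jset at hv
  split at hv
  · next h => exact ⟨h, Finset.mem_inter.1 hv⟩
  · simp at hv

lemma c_not_mem_Pset (t : Fin m) : c ∉ Pset g c t := by
  unfold Pset
  simp

lemma c_not_mem_Jset (hc : ∀ j, c ∈ g j ↔ (j : ℕ) = 0) (t : Fin m) : c ∉ Jset g t := by
  intro h
  obtain ⟨h1, _, h3⟩ := mem_Jset h
  have := (hc _).1 h3
  simp at this

lemma Jset_unique (hL : IsLoosePathSeq g) {v : V} {s t : Fin m}
    (hs : v ∈ Jset g s) (ht : v ∈ Jset g t) : s = t := by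
  obtain ⟨hs1, hs2, hs3⟩ := mem_Jset hs
  obtain ⟨ht1, ht2, ht3⟩ := mem_Jset ht
  rcases lt_trichotomy (s : ℕ) (t : ℕ) with h | h | h
  · have := mem_two hL hs2 ht3 (show (s : ℕ) < (t : ℕ) + 1 by omega)
    simp only [Fin.val_mk] at this; omega
  · exact Fin.ext h
  · have := mem_two hL ht2 hs3 (show (t : ℕ) < (s : ℕ) + 1 by omega)
    simp only [Fin.val_mk] at this; omega

lemma not_mem_Jset_of_mem_Pset {v : V} {s t : Fin m}
    (hv : v ∈ Pset g c t) : v ∉ Jset g s := by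
  intro hJ
  obtain ⟨h1, h2, h3⟩ := mem_Jset hJ
  rw [Pset, Finset.mem_sdiff] at hv
  refine hv.2 (Finset.mem_insert.2 (Or.inr (Finset.mem_biUnion.2 ?_)))
  by_cases hst : s = t
  · exact ⟨⟨(s : ℕ) + 1, h1⟩, by simp [Fin.ext_iff]; omega, by subst hst; exact h3⟩
  · exact ⟨s, by simp [hst], h2⟩

lemma Pset_unique {v : V} {s t : Fin m}
    (hs : v ∈ Pset g c s) (ht : v ∈ Pset g c t) : s = t := by
  by_contra h
  rw [Pset, Finset.mem_sdiff] at hs ht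
  exact ht.2 (Finset.mem_insert.2 (Or.inr (Finset.mem_biUnion.2 ⟨s, by simp [h], hs.1⟩)))

lemma pwt_eq_of_mem_Jset (hL : IsLoosePathSeq g) {y z : Fin m → ℝ} {v : V} {t : Fin m}
    (hv : v ∈ Jset g t) : pwt g c y z v = y t := by
  rw [pwt, Finset.sum_eq_single t]
  · rw [if_pos hv, if_neg (fun h => not_mem_Jset_of_mem_Pset h hv), add_zero]
  · intro s _ hst
    rw [if_neg (fun h => hst (Jset_unique hL h hv)),
      if_neg (fun h => not_mem_Jset_of_mem_Pset h hv), add_zero]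
  · simp

lemma pwt_eq_of_mem_Pset (hL : IsLoosePathSeq g) {y z : Fin m → ℝ} {v : V} {t : Fin m}
    (hv : v ∈ Pset g c t) : pwt g c y z v = z t := by
  rw [pwt, Finset.sum_eq_single t]
  · rw [if_pos hv, if_neg (not_mem_Jset_of_mem_Pset hv), zero_add]
  · intro s _ hst
    rw [if_neg (not_mem_Jset_of_mem_Pset hv), if_neg (fun h => hst (Pset_unique h hv)),
      add_zero]
  · simp

lemma pwt_eq_zero {y z : Fin m → ℝ} {v : V} (hv : v ∉ pathVerts g) :
    pwt g c y z v = 0 := by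
  have hv' : ∀ t, v ∉ g t := by
    intro t ht
    exact hv (Finset.mem_biUnion.2 ⟨t, Finset.mem_univ t, ht⟩)
  rw [pwt]
  apply Finset.sum_eq_zero
  intro t _
  rw [if_neg (fun h => hv' t (Jset_subset t h)), if_neg (fun h => hv' t (Pset_subset t h)),
    add_zero]

lemma pwt_c_eq_zero (hc : ∀ j, c ∈ g j ↔ (j : ℕ) = 0) (y z : Fin m → ℝ) :
    pwt g c y z c = 0 := by
  rw [pwt]
  apply Finset.sum_eq_zero
  intro t _
  rw [if_neg (c_not_mem_Jset hc t), if_neg (c_not_mem_Pset t), add_zero]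

lemma pwt_nonneg {y z : Fin m → ℝ} (hy : ∀ t, 0 ≤ y t) (hz : ∀ t, 0 ≤ z t) (v : V) :
    0 ≤ pwt g c y z v := by
  apply Finset.sum_nonneg
  intro t _
  have h1 : (0:ℝ) ≤ if v ∈ Jset g t then y t else 0 := by split <;> simp [hy t]
  have h2 : (0:ℝ) ≤ if v ∈ Pset g c t then z t else 0 := by split <;> simp [hz t]
  linarith

lemma Jset_card (hL : IsLoosePathSeq g) {t : Fin m} (h : (t : ℕ) + 1 < m) :
    (Jset g t).card = 1 := by
  rw [Jset, dif_pos h]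
  exact hL.1 t ⟨(t : ℕ) + 1, h⟩ rfl

lemma Jset_card_last {t : Fin m} (h : ¬ ((t : ℕ) + 1 < m)) : (Jset g t).card = 0 := by
  rw [Jset, dif_neg h]; simp

/-- Decomposition of each edge into back joint, forward joint set and pendant set. -/
lemma edge_decomp (hL : IsLoosePathSeq g) (hcard : ∀ t, (g t).card = 4)
    (hc : ∀ j, c ∈ g j ↔ (j : ℕ) = 0) (t : Fin m) :
    ∃ b, b ∉ Jset g t ∪ Pset g c t ∧ g t = insert b (Jset g t ∪ Pset g c t) ∧
      ((t : ℕ) = 0 → b = c) ∧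
      ∀ h : 0 < (t : ℕ), b ∈ Jset g ⟨(t : ℕ) - 1, lt_of_le_of_lt (Nat.sub_le _ _) t.isLt⟩ := by
  have hsub : ∀ v ∈ g t, v ∉ Pset g c t → v = c ∨ ∃ s : Fin m, s ≠ t ∧ v ∈ g s := by
    intro v hvg hvP
    rw [Pset, Finset.mem_sdiff] at hvP
    push_neg at hvP
    have := hvP hvg
    rcases Finset.mem_insert.1 this with h | h
    · exact Or.inl h
    · obtain ⟨s, hs, hvs⟩ := Finset.mem_biUnion.1 h
      exact Or.inr ⟨s, (Finset.mem_filter.1 hs).2, hvs⟩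
  by_cases ht0 : (t : ℕ) = 0
  · refine ⟨c, ?_, ?_, fun _ => rfl, fun h => absurd ht0 (by omega)⟩
    · simp [c_not_mem_Jset hc, c_not_mem_Pset]
    · apply Finset.Subset.antisymm
      · intro v hv
        rw [Finset.mem_insert, Finset.mem_union]
        by_cases hvP : v ∈ Pset g c t
        · exact Or.inr (Or.inr hvP)
        · rcases hsub v hv hvP with h | ⟨s, hst, hvs⟩
          · exact Or.inl h
          · -- v ∈ g t and v ∈ g s with s ≠ t, t = 0, so t + 1 = s
            have hlt : (t : ℕ) < (s : ℕ) := by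
              rcases Nat.lt_or_ge (t : ℕ) (s : ℕ) with h' | h'
              · exact h'
              · exfalso; exact hst (Fin.ext (by omega))
            have h1 : (t : ℕ) + 1 = (s : ℕ) := mem_two hL hv hvs hlt
            refine Or.inr (Or.inl ?_)
            rw [Jset, dif_pos (h1 ▸ s.isLt)]
            exact Finset.mem_inter.2 ⟨hv, by rwa [show (⟨(t:ℕ)+1, h1 ▸ s.isLt⟩ : Fin m) = s from Fin.ext h1]⟩
      · intro v hv
        rcases Finset.mem_insert.1 hv with h | h
        · subst h; exact (hc t).2 ht0
        · rcases Finset.mem_union.1 h with h | h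
          · exact Jset_subset t h
          · exact Pset_subset t h
  · -- t ≥ 1
    have htpos : 0 < (t : ℕ) := by omega
    set tp : Fin m := ⟨(t : ℕ) - 1, lt_of_le_of_lt (Nat.sub_le _ _) t.isLt⟩ with htp
    have htp1 : (tp : ℕ) + 1 = (t : ℕ) := by simp [htp]; omega
    have hJtp : Jset g tp = g tp ∩ g t := by
      rw [Jset, dif_pos (htp1 ▸ t.isLt)]
      congr 1
      exact congrArg g (Fin.ext htp1)
    have hone : (g tp ∩ g t).card = 1 := hL.1 tp t htp1
    obtain ⟨b, hb⟩ := Finset.card_eq_one.1 hone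
    have hbt : b ∈ g t := (Finset.mem_inter.1 (hb ▸ Finset.mem_singleton_self b)).2
    have hbtp : b ∈ g tp := (Finset.mem_inter.1 (hb ▸ Finset.mem_singleton_self b)).1
    have hbc : b ≠ c := by
      intro h
      subst h
      have := (hc t).1 hbt
      omega
    have hbJ : b ∉ Jset g t := by
      intro h
      obtain ⟨h1, _, h3⟩ := mem_Jset h
      have : g tp ∩ g ⟨(t : ℕ) + 1, h1⟩ = ∅ := sep hL (by simp [htp]; omega)
      have : b ∈ g tp ∩ g ⟨(t : ℕ) + 1, h1⟩ := Finset.mem_inter.2 ⟨hbtp, h3⟩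
      simp_all
    have hbP : b ∉ Pset g c t := by
      intro h
      rw [Pset, Finset.mem_sdiff] at h
      refine h.2 (Finset.mem_insert.2 (Or.inr (Finset.mem_biUnion.2 ⟨tp, ?_, hbtp⟩)))
      simp only [Finset.mem_filter, Finset.mem_univ, true_and]
      intro he
      rw [he] at htp1
      omega
    refine ⟨b, by simp [hbJ, hbP], ?_, fun h => absurd h ht0, fun _ => hJtp ▸ Finset.mem_inter.2 ⟨hbtp, hbt⟩⟩
    apply Finset.Subset.antisymm
    · intro v hv
      rw [Finset.mem_insert, Finset.mem_union]
      by_cases hvP : v ∈ Pset g c t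
      · exact Or.inr (Or.inr hvP)
      · rcases hsub v hv hvP with h | ⟨s, hst, hvs⟩
        · exfalso
          subst h
          have := (hc t).1 hv
          omega
        · rcases lt_trichotomy (s : ℕ) (t : ℕ) with hlt | heq | hgt
          · have h1 : (s : ℕ) + 1 = (t : ℕ) := mem_two hL hvs hv hlt
            have hseq : s = tp := Fin.ext (by simp [htp]; omega)
            subst hseq
            have : v ∈ g tp ∩ g t := Finset.mem_inter.2 ⟨hvs, hv⟩
            rw [hb] at this
            exact Or.inl (Finset.mem_singleton.1 this)
          · exact absurd (Fin.ext heq) hst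
          · have h1 : (t : ℕ) + 1 = (s : ℕ) := mem_two hL hv hvs hgt
            refine Or.inr (Or.inl ?_)
            rw [Jset, dif_pos (h1 ▸ s.isLt)]
            exact Finset.mem_inter.2 ⟨hv, by rwa [show (⟨(t:ℕ)+1, h1 ▸ s.isLt⟩ : Fin m) = s from Fin.ext h1]⟩
    · intro v hv
      rcases Finset.mem_insert.1 hv with h | h
      · subst h; exact hbt
      · rcases Finset.mem_union.1 h with h | h
        · exact Jset_subset t h
        · exact Pset_subset t h

lemma JP_disjoint (t : Fin m) : Disjoint (Jset g t) (Pset g c t) := by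
  rw [Finset.disjoint_right]
  exact fun v hv => not_mem_Jset_of_mem_Pset hv

lemma Pset_card (hL : IsLoosePathSeq g) (hcard : ∀ t, (g t).card = 4)
    (hc : ∀ j, c ∈ g j ↔ (j : ℕ) = 0) (t : Fin m) :
    (Pset g c t).card = if (t : ℕ) + 1 < m then 2 else 3 := by
  obtain ⟨b, hbn, hdec, -, -⟩ := edge_decomp hL hcard hc t
  have h4 : (g t).card = 4 := hcard t
  rw [hdec, Finset.card_insert_of_notMem hbn,
    Finset.card_union_of_disjoint (JP_disjoint t)] at h4
  by_cases h : (t : ℕ) + 1 < m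
  · rw [if_pos h]
    have := Jset_card hL h
    omega
  · rw [if_neg h]
    have := Jset_card_last (g := g) h
    omega

lemma pathVerts_eq (hL : IsLoosePathSeq g) (hcard : ∀ t, (g t).card = 4)
    (hc : ∀ j, c ∈ g j ↔ (j : ℕ) = 0) (hm : 0 < m) :
    pathVerts g = insert c (Finset.univ.biUnion fun t => Jset g t ∪ Pset g c t) := by
  apply Finset.Subset.antisymm
  · intro v hv
    obtain ⟨t, -, hvt⟩ := Finset.mem_biUnion.1 hv
    obtain ⟨b, hbn, hdec, hb0, hbJ⟩ := edge_decomp hL hcard hc t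
    rw [hdec, Finset.mem_insert] at hvt
    rcases hvt with h | h
    · subst h
      by_cases ht0 : (t : ℕ) = 0
      · rw [hb0 ht0]; exact Finset.mem_insert_self _ _
      · exact Finset.mem_insert.2 (Or.inr (Finset.mem_biUnion.2
          ⟨⟨(t : ℕ) - 1, lt_of_le_of_lt (Nat.sub_le _ _) t.isLt⟩, Finset.mem_univ _,
            Finset.mem_union_left _ (hbJ (by omega))⟩))
    · exact Finset.mem_insert.2 (Or.inr (Finset.mem_biUnion.2 ⟨t, Finset.mem_univ _, h⟩))
  · intro v hv
    rcases Finset.mem_insert.1 hv with h | h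
    · subst h
      exact Finset.mem_biUnion.2 ⟨⟨0, hm⟩, Finset.mem_univ _, (hc _).2 rfl⟩
    · obtain ⟨t, -, hvt⟩ := Finset.mem_biUnion.1 h
      rcases Finset.mem_union.1 hvt with h' | h'
      · exact Finset.mem_biUnion.2 ⟨t, Finset.mem_univ _, Jset_subset t h'⟩
      · exact Finset.mem_biUnion.2 ⟨t, Finset.mem_univ _, Pset_subset t h'⟩

end Path

def pathN {m : ℕ} (A0 : ℝ) (y z : Fin m → ℝ) : ℝ :=
  ∑ t : Fin m,
    (if (t : ℕ) = 0 then A0 else y ⟨(t : ℕ) - 1, lt_of_le_of_lt (Nat.sub_le _ _) t.isLt⟩) *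
    (if (t : ℕ) + 1 < m then y t * z t ^ 2 else z t ^ 3)

def pathD {m : ℕ} (y z : Fin m → ℝ) : ℝ :=
  ∑ t : Fin m, (if (t : ℕ) + 1 < m then y t ^ 4 + 2 * z t ^ 4 else 3 * z t ^ 4)

lemma bddAbove_S (H : Hypergraph' V) (hu : H.IsUniform 4) :
    BddAbove {t : ℝ | ∃ x : V → ℝ, (∀ v, 0 ≤ x v) ∧ (∃ v ∈ H.vertexSet, x v ≠ 0) ∧
      t = (∑ e ∈ H.edges, ∏ v ∈ e, x v) / (∑ v ∈ H.vertexSet, x v ^ 4)} := by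
  refine ⟨(H.edges.card : ℝ), ?_⟩
  rintro t ⟨x, hx, ⟨v0, hv0, hxv0⟩, rfl⟩
  have hD : 0 < ∑ v ∈ H.vertexSet, x v ^ 4 :=
    Finset.sum_pos' (fun v _ => by positivity) ⟨v0, hv0, by positivity⟩
  rw [div_le_iff₀ hD]
  calc ∑ e ∈ H.edges, ∏ v ∈ e, x v ≤ ∑ _e ∈ H.edges, ∑ v ∈ H.vertexSet, x v ^ 4 := by
        apply Finset.sum_le_sum
        intro e he
        have hcard : e.card = 4 := hu e he
        have hne : e.Nonempty := Finset.card_pos.1 (by omega)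
        obtain ⟨u, hue, hmax⟩ := Finset.exists_max_image e x hne
        calc ∏ v ∈ e, x v ≤ ∏ _v ∈ e, x u :=
              Finset.prod_le_prod (fun v _ => hx v) (fun v hv => hmax v hv)
          _ = x u ^ 4 := by rw [Finset.prod_const, hcard]
          _ ≤ ∑ v ∈ e, x v ^ 4 := Finset.single_le_sum (f := fun v => x v ^ 4) (fun v _ => by positivity) hue
          _ ≤ ∑ v ∈ H.vertexSet, x v ^ 4 := Finset.sum_le_sum_of_subset_of_nonneg
              (fun v hv => Finset.mem_biUnion.2 ⟨e, he, hv⟩) (fun v _ _ => by positivity)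
    _ = H.edges.card * ∑ v ∈ H.vertexSet, x v ^ 4 := by
        rw [Finset.sum_const, nsmul_eq_mul]

lemma master (H : Hypergraph' V) (hu : H.IsUniform 4)
    (a : Fin 4 → V) (hainj : Function.Injective a) (hae : Finset.univ.image a ∈ H.edges)
    (P : Fin 4 → Σ m : ℕ, Fin m → Finset V)
    (hp : ∀ p, H.IsAttachedPath (Finset.univ.image a) (a p) (P p).2)
    (hdisj : ∀ p q, p ≠ q → pathVerts (P p).2 ∩ pathVerts (P q).2 = ∅)
    (hcov : ∀ f ∈ H.edges, f = Finset.univ.image a ∨ ∃ p t, (P p).2 t = f)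
    (A : Fin 4 → ℝ) (y z : ∀ p, Fin (P p).1 → ℝ)
    (hA : ∀ s, 0 < A s) (hy : ∀ p t, 0 ≤ y p t) (hz : ∀ p t, 0 ≤ z p t) :
    (Nat.factorial 4 : ℝ) * ((∏ s, A s + ∑ p, pathN (A p) (y p) (z p)) /
      (∑ s, A s ^ 4 + ∑ p, pathD (y p) (z p))) ≤ H.spectralRadius 4 := by
  -- abbreviations for path data
  have hLp : ∀ p, IsLoosePathSeq (P p).2 := fun p => (hp p).1
  have hmem : ∀ p t, (P p).2 t ∈ H.edges := fun p => (hp p).2.1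
  have hne : ∀ p t, (P p).2 t ≠ Finset.univ.image a := fun p => (hp p).2.2.1
  have hint : ∀ p, pathVerts (P p).2 ∩ Finset.univ.image a = {a p} :=
    fun p => (hp p).2.2.2.1
  have hcp : ∀ p t, a p ∈ (P p).2 t ↔ (t : ℕ) = 0 := fun p => (hp p).2.2.2.2
  have hcardp : ∀ p t, ((P p).2 t).card = 4 := fun p t => hu _ (hmem p t)
  have hmpos : ∀ p, 0 < (P p).1 := by
    intro p
    have h1 : a p ∈ pathVerts (P p).2 ∩ Finset.univ.image a := by
      rw [hint p]; exact Finset.mem_singleton_self _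
    obtain ⟨t, -, -⟩ := Finset.mem_biUnion.1 (Finset.mem_inter.1 h1).1
    exact t.pos
  have hcross : ∀ p q, p ≠ q → ∀ v, v ∈ pathVerts (P p).2 → v ∉ pathVerts (P q).2 := by
    intro p q hpq v hvp hvq
    have : v ∈ pathVerts (P p).2 ∩ pathVerts (P q).2 := Finset.mem_inter.2 ⟨hvp, hvq⟩
    rw [hdisj p q hpq] at this
    exact absurd this (Finset.notMem_empty v)
  have hcent : ∀ p v, v ∈ pathVerts (P p).2 → v ∈ Finset.univ.image a → v = a p := by
    intro p v h1 h2
    have : v ∈ pathVerts (P p).2 ∩ Finset.univ.image a := Finset.mem_inter.2 ⟨h1, h2⟩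
    rw [hint p] at this
    exact Finset.mem_singleton.1 this
  have hmemP : ∀ p (t : Fin (P p).1) v, v ∈ (P p).2 t → v ∈ pathVerts (P p).2 :=
    fun p t v hv => Finset.mem_biUnion.2 ⟨t, Finset.mem_univ _, hv⟩
  -- the weight function
  set x : V → ℝ := fun v => (∑ s, if v = a s then A s else 0) +
    ∑ p, pwt (P p).2 (a p) (y p) (z p) v with hxdef
  have F1 : ∀ s, x (a s) = A s := by
    intro s
    have h1 : (∑ s', if a s = a s' then A s' else 0) = A s := by
      rw [Finset.sum_eq_single s (fun s' _ hs' => if_neg (fun h => hs' (hainj h).symm))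
        (fun h => absurd (Finset.mem_univ s) h), if_pos rfl]
    have h2 : ∀ p, pwt (P p).2 (a p) (y p) (z p) (a s) = 0 := by
      intro p
      by_cases hps : p = s
      · subst hps; exact pwt_c_eq_zero (hcp p) _ _
      · apply pwt_eq_zero
        intro h
        exact hps (hainj (hcent p _ h (Finset.mem_image_of_mem a (Finset.mem_univ s)))).symm
    rw [hxdef]
    simp only [h1]
    rw [Finset.sum_eq_zero (fun p _ => h2 p), add_zero]
  have hnotc : ∀ p (t : Fin (P p).1) v, (v ∈ Jset (P p).2 t ∪ Pset (P p).2 (a p) t) →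
      ∀ s, v ≠ a s := by
    intro p t v hv s hvas
    have hvg : v ∈ (P p).2 t := by
      rcases Finset.mem_union.1 hv with h | h
      · exact Jset_subset t h
      · exact Pset_subset t h
    have : v = a p := hcent p v (hmemP p t v hvg)
      (hvas ▸ Finset.mem_image_of_mem a (Finset.mem_univ s))
    subst this
    rcases Finset.mem_union.1 hv with h | h
    · exact c_not_mem_Jset (hcp p) t h
    · exact c_not_mem_Pset t h
  have hxJP : ∀ p (t : Fin (P p).1) v, (v ∈ Jset (P p).2 t ∪ Pset (P p).2 (a p) t) →
      x v = pwt (P p).2 (a p) (y p) (z p) v := by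
    intro p t v hv
    have hvg : v ∈ (P p).2 t := by
      rcases Finset.mem_union.1 hv with h | h
      · exact Jset_subset t h
      · exact Pset_subset t h
    have h1 : (∑ s, if v = a s then A s else 0) = 0 :=
      Finset.sum_eq_zero (fun s _ => if_neg (hnotc p t v hv s))
    have h2 : ∀ q, q ≠ p → pwt (P q).2 (a q) (y q) (z q) v = 0 := by
      intro q hqp
      exact pwt_eq_zero (hcross p q (fun h => hqp h.symm) v (hmemP p t v hvg))
    rw [hxdef]
    simp only [h1, zero_add]
    exact Finset.sum_eq_single p (fun q _ hqp => h2 q hqp)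
      (fun h => absurd (Finset.mem_univ p) h)
  have F2 : ∀ p (t : Fin (P p).1) v, v ∈ Jset (P p).2 t → x v = y p t := by
    intro p t v hv
    rw [hxJP p t v (Finset.mem_union_left _ hv)]
    exact pwt_eq_of_mem_Jset (hLp p) hv
  have F3 : ∀ p (t : Fin (P p).1) v, v ∈ Pset (P p).2 (a p) t → x v = z p t := by
    intro p t v hv
    rw [hxJP p t v (Finset.mem_union_right _ hv)]
    exact pwt_eq_of_mem_Pset (hLp p) hv
  have F0 : ∀ v, 0 ≤ x v := by
    intro v
    apply add_nonneg
    · apply Finset.sum_nonneg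
      intro s _
      split
      · exact (hA s).le
      · exact le_refl 0
    · exact Finset.sum_nonneg fun p _ => pwt_nonneg (hy p) (hz p) v
  -- edge set decomposition
  have hedges : H.edges = insert (Finset.univ.image a)
      (Finset.univ.biUnion fun p => Finset.univ.image (P p).2) := by
    apply Finset.Subset.antisymm
    · intro f hf
      rcases hcov f hf with h | ⟨p, t, h⟩
      · exact h ▸ Finset.mem_insert_self _ _
      · exact Finset.mem_insert.2 (Or.inr (Finset.mem_biUnion.2
          ⟨p, Finset.mem_univ _, h ▸ Finset.mem_image_of_mem _ (Finset.mem_univ t)⟩))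
    · intro f hf
      rcases Finset.mem_insert.1 hf with h | h
      · exact h ▸ hae
      · obtain ⟨p, -, hfp⟩ := Finset.mem_biUnion.1 h
        obtain ⟨t, -, rfl⟩ := Finset.mem_image.1 hfp
        exact hmem p t
  have hgne : ∀ p q (t : Fin (P p).1) (t' : Fin (P q).1), p ≠ q → (P p).2 t ≠ (P q).2 t' := by
    intro p q t t' hpq heq
    have hnonempty : ((P p).2 t).Nonempty := Finset.card_pos.1 (by rw [hcardp p t]; omega)
    obtain ⟨v, hv⟩ := hnonempty
    exact hcross p q hpq v (hmemP p t v hv) (hmemP q t' v (heq ▸ hv))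
  have hcentral_notin : Finset.univ.image a ∉
      Finset.univ.biUnion fun p => Finset.univ.image (P p).2 := by
    intro h
    obtain ⟨p, -, hfp⟩ := Finset.mem_biUnion.1 h
    obtain ⟨t, -, heq⟩ := Finset.mem_image.1 hfp
    exact hne p t heq
  have himg_disj : Set.PairwiseDisjoint (↑(Finset.univ : Finset (Fin 4)))
      (fun p => Finset.univ.image (P p).2) := by
    intro p _ q _ hpq
    dsimp only [Function.onFun]
    rw [Finset.disjoint_left]
    intro f hfp hfq
    obtain ⟨t, -, rfl⟩ := Finset.mem_image.1 hfp
    obtain ⟨t', -, heq⟩ := Finset.mem_image.1 hfq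
    exact hgne p q t t' hpq heq.symm
  -- per-edge products
  have F6 : ∀ p (t : Fin (P p).1), (∏ v ∈ (P p).2 t, x v) =
      (if (t : ℕ) = 0 then A p else
        y p ⟨(t : ℕ) - 1, lt_of_le_of_lt (Nat.sub_le _ _) t.isLt⟩) *
      (if (t : ℕ) + 1 < (P p).1 then y p t * z p t ^ 2 else z p t ^ 3) := by
    intro p t
    obtain ⟨b, hbn, hdec, hb0, hbJ⟩ := edge_decomp (hLp p) (hcardp p) (hcp p) t
    rw [hdec, Finset.prod_insert hbn, Finset.prod_union (JP_disjoint t)]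
    have hJ : (∏ v ∈ Jset (P p).2 t, x v) = y p t ^ (Jset (P p).2 t).card := by
      rw [Finset.prod_congr rfl (fun v hv => F2 p t v hv), Finset.prod_const]
    have hP : (∏ v ∈ Pset (P p).2 (a p) t, x v) = z p t ^ (Pset (P p).2 (a p) t).card := by
      rw [Finset.prod_congr rfl (fun v hv => F3 p t v hv), Finset.prod_const]
    have hxb : x b = if (t : ℕ) = 0 then A p else
        y p ⟨(t : ℕ) - 1, lt_of_le_of_lt (Nat.sub_le _ _) t.isLt⟩ := by
      by_cases h0 : (t : ℕ) = 0
      · rw [if_pos h0, hb0 h0, F1]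
      · rw [if_neg h0]
        exact F2 p _ b (hbJ (by omega))
    rw [hJ, hP, hxb, Pset_card (hLp p) (hcardp p) (hcp p) t]
    by_cases h1 : (t : ℕ) + 1 < (P p).1
    · rw [Jset_card (hLp p) h1]
      simp only [if_pos h1, pow_one]
      try ring
    · rw [Jset_card_last h1]
      simp only [if_neg h1, pow_zero]
      try ring
  have hnum : (∑ e ∈ H.edges, ∏ v ∈ e, x v) =
      ∏ s, A s + ∑ p, pathN (A p) (y p) (z p) := by
    rw [hedges, Finset.sum_insert hcentral_notin, Finset.sum_biUnion himg_disj]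
    congr 1
    · rw [Finset.prod_image (fun s _ s' _ h => hainj h)]
      exact Finset.prod_congr rfl fun s _ => F1 s
    · refine Finset.sum_congr rfl fun p _ => ?_
      rw [Finset.sum_image (fun t _ t' _ h => g_inj (hLp p) (hcardp p) h)]
      exact Finset.sum_congr rfl fun t _ => F6 p t
  -- vertex set decomposition
  have hvs : H.vertexSet = Finset.univ.image a ∪ (Finset.univ.biUnion fun p =>
      Finset.univ.biUnion fun t => Jset (P p).2 t ∪ Pset (P p).2 (a p) t) := by
    have hpv : ∀ p, pathVerts (P p).2 = insert (a p)
        (Finset.univ.biUnion fun t => Jset (P p).2 t ∪ Pset (P p).2 (a p) t) :=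
      fun p => pathVerts_eq (hLp p) (hcardp p) (hcp p) (hmpos p)
    apply Finset.Subset.antisymm
    · intro v hv
      obtain ⟨e, he, hve⟩ := Finset.mem_biUnion.1 hv
      simp only [id] at hve
      rcases hcov e he with rfl | ⟨p, t, rfl⟩
      · exact Finset.mem_union_left _ hve
      · have : v ∈ pathVerts (P p).2 := hmemP p t v hve
        rw [hpv p, Finset.mem_insert] at this
        rcases this with rfl | h
        · exact Finset.mem_union_left _ (Finset.mem_image_of_mem a (Finset.mem_univ p))
        · exact Finset.mem_union_right _ (Finset.mem_biUnion.2 ⟨p, Finset.mem_univ _, h⟩)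
    · intro v hv
      rcases Finset.mem_union.1 hv with h | h
      · exact Finset.mem_biUnion.2 ⟨_, hae, h⟩
      · obtain ⟨p, -, hp'⟩ := Finset.mem_biUnion.1 h
        obtain ⟨t, -, hv'⟩ := Finset.mem_biUnion.1 hp'
        have hvg : v ∈ (P p).2 t := by
          rcases Finset.mem_union.1 hv' with h' | h'
          · exact Jset_subset t h'
          · exact Pset_subset t h'
        exact Finset.mem_biUnion.2 ⟨(P p).2 t, hmem p t, hvg⟩
  have hd1 : Disjoint (Finset.univ.image a) (Finset.univ.biUnion fun p =>
      Finset.univ.biUnion fun t => Jset (P p).2 t ∪ Pset (P p).2 (a p) t) := by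
    rw [Finset.disjoint_left]
    intro v hv hv'
    obtain ⟨p, -, hp'⟩ := Finset.mem_biUnion.1 hv'
    obtain ⟨t, -, hv''⟩ := Finset.mem_biUnion.1 hp'
    obtain ⟨s, -, rfl⟩ := Finset.mem_image.1 hv
    exact hnotc p t (a s) hv'' s rfl
  have hd2 : Set.PairwiseDisjoint (↑(Finset.univ : Finset (Fin 4))) (fun p =>
      Finset.univ.biUnion fun t => Jset (P p).2 t ∪ Pset (P p).2 (a p) t) := by
    intro p _ q _ hpq
    dsimp only [Function.onFun]
    rw [Finset.disjoint_left]
    intro v hvp hvq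
    obtain ⟨t, -, hv1⟩ := Finset.mem_biUnion.1 hvp
    obtain ⟨t', -, hv2⟩ := Finset.mem_biUnion.1 hvq
    have h1 : v ∈ (P p).2 t := by
      rcases Finset.mem_union.1 hv1 with h' | h'
      · exact Jset_subset t h'
      · exact Pset_subset t h'
    have h2 : v ∈ (P q).2 t' := by
      rcases Finset.mem_union.1 hv2 with h' | h'
      · exact Jset_subset t' h'
      · exact Pset_subset t' h'
    exact hcross p q hpq v (hmemP p t v h1) (hmemP q t' v h2)
  have hd3 : ∀ p, Set.PairwiseDisjoint (↑(Finset.univ : Finset (Fin (P p).1))) (fun t =>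
      Jset (P p).2 t ∪ Pset (P p).2 (a p) t) := by
    intro p t _ t' _ htt'
    dsimp only [Function.onFun]
    rw [Finset.disjoint_left]
    intro v hv1 hv2
    apply htt'
    rcases Finset.mem_union.1 hv1 with h1 | h1 <;> rcases Finset.mem_union.1 hv2 with h2 | h2
    · exact Jset_unique (hLp p) h1 h2
    · exact absurd h1 (not_mem_Jset_of_mem_Pset h2)
    · exact absurd h2 (not_mem_Jset_of_mem_Pset h1)
    · exact Pset_unique h1 h2
  have hden : (∑ v ∈ H.vertexSet, x v ^ 4) =
      ∑ s, A s ^ 4 + ∑ p, pathD (y p) (z p) := by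
    rw [hvs, Finset.sum_union hd1, Finset.sum_biUnion hd2]
    congr 1
    · rw [Finset.sum_image (fun s _ s' _ h => hainj h)]
      exact Finset.sum_congr rfl fun s _ => by rw [F1]
    · refine Finset.sum_congr rfl fun p _ => ?_
      rw [Finset.sum_biUnion (hd3 p)]
      refine Finset.sum_congr rfl fun t _ => ?_
      rw [Finset.sum_union (JP_disjoint t)]
      have hJ : (∑ v ∈ Jset (P p).2 t, x v ^ 4) = (Jset (P p).2 t).card * y p t ^ 4 := by
        rw [Finset.sum_congr rfl (fun v hv => by rw [F2 p t v hv]), Finset.sum_const,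
          nsmul_eq_mul]
      have hP : (∑ v ∈ Pset (P p).2 (a p) t, x v ^ 4) =
          (Pset (P p).2 (a p) t).card * z p t ^ 4 := by
        rw [Finset.sum_congr rfl (fun v hv => by rw [F3 p t v hv]), Finset.sum_const,
          nsmul_eq_mul]
      rw [hJ, hP, Pset_card (hLp p) (hcardp p) (hcp p) t]
      by_cases h1 : (t : ℕ) + 1 < (P p).1
      · rw [Jset_card (hLp p) h1]
        simp only [if_pos h1]
        norm_num
      · rw [Jset_card_last h1]
        simp only [if_neg h1]
        norm_num
  -- conclude
  have ha0vs : a 0 ∈ H.vertexSet :=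
    Finset.mem_biUnion.2 ⟨_, hae, Finset.mem_image_of_mem a (Finset.mem_univ 0)⟩
  have hmemS : (∏ s, A s + ∑ p, pathN (A p) (y p) (z p)) /
      (∑ s, A s ^ 4 + ∑ p, pathD (y p) (z p)) ∈
      {t : ℝ | ∃ x : V → ℝ, (∀ v, 0 ≤ x v) ∧ (∃ v ∈ H.vertexSet, x v ≠ 0) ∧
        t = (∑ e ∈ H.edges, ∏ v ∈ e, x v) / (∑ v ∈ H.vertexSet, x v ^ 4)} := by
    refine ⟨x, F0, ⟨a 0, ha0vs, by rw [F1]; exact (hA 0).ne'⟩, ?_⟩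
    rw [hnum, hden]
  rw [Hypergraph'.spectralRadius]
  exact mul_le_mul_of_nonneg_left (le_csSup (bddAbove_S H hu) hmemS) (by positivity)



set_option maxHeartbeats 1000000 in
lemma dagger_bound (H : Hypergraph' V) {i j k l : ℕ} (hd : H.IsDagger4 i j k l)
    (A0 A1 A2 A3 : ℝ) (y₁ z₁ : Fin i → ℝ) (y₂ z₂ : Fin j → ℝ)
    (y₃ z₃ : Fin k → ℝ) (y₄ z₄ : Fin l → ℝ)
    (hA0 : 0 < A0) (hA1 : 0 < A1) (hA2 : 0 < A2) (hA3 : 0 < A3)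
    (hy₁ : ∀ t, 0 ≤ y₁ t) (hz₁ : ∀ t, 0 ≤ z₁ t)
    (hy₂ : ∀ t, 0 ≤ y₂ t) (hz₂ : ∀ t, 0 ≤ z₂ t)
    (hy₃ : ∀ t, 0 ≤ y₃ t) (hz₃ : ∀ t, 0 ≤ z₃ t)
    (hy₄ : ∀ t, 0 ≤ y₄ t) (hz₄ : ∀ t, 0 ≤ z₄ t) :
    (Nat.factorial 4 : ℝ) *
      ((A0 * A1 * A2 * A3 +
        (pathN A0 y₁ z₁ + pathN A1 y₂ z₂ + pathN A2 y₃ z₃ + pathN A3 y₄ z₄)) /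
      (A0 ^ 4 + A1 ^ 4 + A2 ^ 4 + A3 ^ 4 +
        (pathD y₁ z₁ + pathD y₂ z₂ + pathD y₃ z₃ + pathD y₄ z₄))) ≤ H.spectralRadius 4 := by
  obtain ⟨hu, a, g₁, g₂, g₃, g₄, hainj, hae, hp1, hp2, hp3, hp4,
    h12, h13, h14, h23, h24, h34, hcov⟩ := hd
  have hp' : ∀ p : Fin 4, H.IsAttachedPath (Finset.univ.image a) (a p)
      ((![⟨i, g₁⟩, ⟨j, g₂⟩, ⟨k, g₃⟩, ⟨l, g₄⟩] : Fin 4 → Σ m : ℕ, Fin m → Finset V) p).2 := by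
    intro p
    exact match p with
    | 0 => hp1
    | 1 => hp2
    | 2 => hp3
    | 3 => hp4
  have hdisj' : ∀ p q : Fin 4, p ≠ q →
      pathVerts ((![⟨i, g₁⟩, ⟨j, g₂⟩, ⟨k, g₃⟩, ⟨l, g₄⟩] : Fin 4 → Σ m : ℕ, Fin m → Finset V) p).2 ∩
      pathVerts ((![⟨i, g₁⟩, ⟨j, g₂⟩, ⟨k, g₃⟩, ⟨l, g₄⟩] : Fin 4 → Σ m : ℕ, Fin m → Finset V) q).2
        = ∅ := by
    have h21 : pathVerts g₂ ∩ pathVerts g₁ = ∅ := by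
      rw [Finset.inter_comm]; exact h12
    have h31 : pathVerts g₃ ∩ pathVerts g₁ = ∅ := by
      rw [Finset.inter_comm]; exact h13
    have h41 : pathVerts g₄ ∩ pathVerts g₁ = ∅ := by
      rw [Finset.inter_comm]; exact h14
    have h32 : pathVerts g₃ ∩ pathVerts g₂ = ∅ := by
      rw [Finset.inter_comm]; exact h23
    have h42 : pathVerts g₄ ∩ pathVerts g₂ = ∅ := by
      rw [Finset.inter_comm]; exact h24
    have h43 : pathVerts g₄ ∩ pathVerts g₃ = ∅ := by
      rw [Finset.inter_comm]; exact h34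
    intro p q hpq
    exact match p, q, hpq with
    | 0, 0, h => absurd rfl h
    | 0, 1, _ => h12
    | 0, 2, _ => h13
    | 0, 3, _ => h14
    | 1, 0, _ => h21
    | 1, 1, h => absurd rfl h
    | 1, 2, _ => h23
    | 1, 3, _ => h24
    | 2, 0, _ => h31
    | 2, 1, _ => h32
    | 2, 2, h => absurd rfl h
    | 2, 3, _ => h34
    | 3, 0, _ => h41
    | 3, 1, _ => h42
    | 3, 2, _ => h43
    | 3, 3, h => absurd rfl h
  have hcov' : ∀ f ∈ H.edges, f = Finset.univ.image a ∨ ∃ (p : Fin 4)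
      (t : Fin ((![⟨i, g₁⟩, ⟨j, g₂⟩, ⟨k, g₃⟩, ⟨l, g₄⟩] : Fin 4 → Σ m : ℕ, Fin m → Finset V) p).1),
      ((![⟨i, g₁⟩, ⟨j, g₂⟩, ⟨k, g₃⟩, ⟨l, g₄⟩] : Fin 4 → Σ m : ℕ, Fin m → Finset V) p).2 t = f := by
    intro f hf
    rcases hcov f hf with h | ⟨t, ht⟩ | ⟨t, ht⟩ | ⟨t, ht⟩ | ⟨t, ht⟩
    · exact Or.inl h
    · exact Or.inr ⟨0, t, ht⟩
    · exact Or.inr ⟨1, t, ht⟩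
    · exact Or.inr ⟨2, t, ht⟩
    · exact Or.inr ⟨3, t, ht⟩
  have h := master H hu a hainj hae (![⟨i, g₁⟩, ⟨j, g₂⟩, ⟨k, g₃⟩, ⟨l, g₄⟩]) hp' hdisj' hcov'
    (fun s => match s with | 0 => A0 | 1 => A1 | 2 => A2 | 3 => A3)
    (fun p => match p with | 0 => y₁ | 1 => y₂ | 2 => y₃ | 3 => y₄)
    (fun p => match p with | 0 => z₁ | 1 => z₂ | 2 => z₃ | 3 => z₄)
    (fun s => match s with | 0 => hA0 | 1 => hA1 | 2 => hA2 | 3 => hA3)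
    (fun p => match p with | 0 => hy₁ | 1 => hy₂ | 2 => hy₃ | 3 => hy₄)
    (fun p => match p with | 0 => hz₁ | 1 => hz₂ | 2 => hz₃ | 3 => hz₄)
  rw [Fin.prod_univ_four, Fin.sum_univ_four, Fin.sum_univ_four, Fin.sum_univ_four] at h
  exact h

lemma threshold_lt (q : ℝ) (hq0 : 0 ≤ q) (h : 2 + Real.sqrt 5 < (q / 6) ^ (4 : ℕ)) :
    6 * (2 + Real.sqrt 5) ^ ((1 : ℝ) / 4) < q := by
  have h5 : (0:ℝ) ≤ 2 + Real.sqrt 5 := by positivity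
  have h1 : ((2:ℝ) + Real.sqrt 5) ^ ((1:ℝ)/4) < ((q/6) ^ (4:ℕ)) ^ ((1:ℝ)/4) :=
    Real.rpow_lt_rpow h5 h (by norm_num)
  have hq : 0 ≤ q / 6 := by linarith
  have h2 : ((q/6) ^ (4:ℕ)) ^ ((1:ℝ)/4) = q/6 := by
    rw [← Real.rpow_natCast (q/6) 4, ← Real.rpow_mul hq]
    norm_num
  rw [h2] at h1
  linarith

end DaggerAux


set_option maxHeartbeats 2000000 in
/-- The 4-daggers `H^{(4)}_{2,2,2,2}`, `H^{(4)}_{1,2,2,4}`, `H^{(4)}_{1,2,3,3}`,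
`H^{(4)}_{1,1,5,5}`, `H^{(4)}_{1,1,4,6}` all have spectral radius strictly greater than
`6·(2+√5)^{1/4}`. -/
theorem dagger_spectralRadius_gt {V : Type} [DecidableEq V] (H : Hypergraph' V)
    (i j k l : ℕ) (hd : H.IsDagger4 i j k l)
    (hc : (i, j, k, l) = (2, 2, 2, 2) ∨ (i, j, k, l) = (1, 2, 2, 4) ∨
      (i, j, k, l) = (1, 2, 3, 3) ∨ (i, j, k, l) = (1, 1, 5, 5) ∨
      (i, j, k, l) = (1, 1, 4, 6)) :
    6 * (2 + Real.sqrt 5) ^ ((1 : ℝ) / 4) < H.spectralRadius 4 := by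
  rcases hc with h | h | h | h | h
  · simp only [Prod.mk.injEq] at h
    obtain ⟨rfl, rfl, rfl, rfl⟩ := h
    have hb := DaggerAux.dagger_bound H hd (1 : ℝ) 1 1 1
      (fun t : Fin 2 => if (t : ℕ) = 0 then (0.794 : ℝ) else (1 : ℝ))
      (fun t : Fin 2 => if (t : ℕ) = 0 then (0.7429 : ℝ) else (0.552 : ℝ))
      (fun t : Fin 2 => if (t : ℕ) = 0 then (0.794 : ℝ) else (1 : ℝ))
      (fun t : Fin 2 => if (t : ℕ) = 0 then (0.7429 : ℝ) else (0.552 : ℝ))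
      (fun t : Fin 2 => if (t : ℕ) = 0 then (0.794 : ℝ) else (1 : ℝ))
      (fun t : Fin 2 => if (t : ℕ) = 0 then (0.7429 : ℝ) else (0.552 : ℝ))
      (fun t : Fin 2 => if (t : ℕ) = 0 then (0.794 : ℝ) else (1 : ℝ))
      (fun t : Fin 2 => if (t : ℕ) = 0 then (0.7429 : ℝ) else (0.552 : ℝ))
      (by norm_num) (by norm_num) (by norm_num) (by norm_num)
      (by intro t; first | (split_ifs <;> norm_num) | norm_num) (by intro t; first | (split_ifs <;> norm_num) | norm_num)
      (by intro t; first | (split_ifs <;> norm_num) | norm_num) (by intro t; first | (split_ifs <;> norm_num) | norm_num)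
      (by intro t; first | (split_ifs <;> norm_num) | norm_num) (by intro t; first | (split_ifs <;> norm_num) | norm_num)
      (by intro t; first | (split_ifs <;> norm_num) | norm_num) (by intro t; first | (split_ifs <;> norm_num) | norm_num)
    norm_num [DaggerAux.pathN, DaggerAux.pathD, Fin.sum_univ_succ, Nat.factorial] at hb
    refine lt_of_lt_of_le (DaggerAux.threshold_lt _ (by norm_num) ?_) hb
    rw [← lt_sub_iff_add_lt']
    exact (Real.sqrt_lt' (by norm_num)).2 (by norm_num)
  · simp only [Prod.mk.injEq] at h
    obtain ⟨rfl, rfl, rfl, rfl⟩ := h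
    have hb := DaggerAux.dagger_bound H hd (0.9671 : ℝ) 0.9915 0.9915 1.0099
      (fun _ : Fin 1 => (1 : ℝ))
      (fun _ : Fin 1 => (0.6737 : ℝ))
      (fun t : Fin 2 => if (t : ℕ) = 0 then (0.7899 : ℝ) else (1 : ℝ))
      (fun t : Fin 2 => if (t : ℕ) = 0 then (0.7386 : ℝ) else (0.5503 : ℝ))
      (fun t : Fin 2 => if (t : ℕ) = 0 then (0.7899 : ℝ) else (1 : ℝ))
      (fun t : Fin 2 => if (t : ℕ) = 0 then (0.7386 : ℝ) else (0.5503 : ℝ))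
      (fun t : Fin 4 => if (t : ℕ) = 0 then (0.8661 : ℝ) else if (t : ℕ) = 1 then (0.7252 : ℝ) else if (t : ℕ) = 2 then (0.5778 : ℝ) else (1 : ℝ))
      (fun t : Fin 4 => if (t : ℕ) = 0 then (0.7805 : ℝ) else if (t : ℕ) = 1 then (0.6615 : ℝ) else if (t : ℕ) = 2 then (0.5403 : ℝ) else (0.4025 : ℝ))
      (by norm_num) (by norm_num) (by norm_num) (by norm_num)
      (by intro t; first | (split_ifs <;> norm_num) | norm_num) (by intro t; first | (split_ifs <;> norm_num) | norm_num)
      (by intro t; first | (split_ifs <;> norm_num) | norm_num) (by intro t; first | (split_ifs <;> norm_num) | norm_num)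
      (by intro t; first | (split_ifs <;> norm_num) | norm_num) (by intro t; first | (split_ifs <;> norm_num) | norm_num)
      (by intro t; first | (split_ifs <;> norm_num) | norm_num) (by intro t; first | (split_ifs <;> norm_num) | norm_num)
    norm_num [DaggerAux.pathN, DaggerAux.pathD, Fin.sum_univ_succ, Nat.factorial] at hb
    refine lt_of_lt_of_le (DaggerAux.threshold_lt _ (by norm_num) ?_) hb
    rw [← lt_sub_iff_add_lt']
    exact (Real.sqrt_lt' (by norm_num)).2 (by norm_num)
  · simp only [Prod.mk.injEq] at h
    obtain ⟨rfl, rfl, rfl, rfl⟩ := h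
    have hb := DaggerAux.dagger_bound H hd (0.9736 : ℝ) 0.9978 1.0094 1.0094
      (fun _ : Fin 1 => (1 : ℝ))
      (fun _ : Fin 1 => (0.6771 : ℝ))
      (fun t : Fin 2 => if (t : ℕ) = 0 then (0.7929 : ℝ) else (1 : ℝ))
      (fun t : Fin 2 => if (t : ℕ) = 0 then (0.7417 : ℝ) else (0.5514 : ℝ))
      (fun t : Fin 3 => if (t : ℕ) = 0 then (0.8423 : ℝ) else if (t : ℕ) = 1 then (0.6694 : ℝ) else (1 : ℝ))
      (fun t : Fin 3 => if (t : ℕ) = 0 then (0.769 : ℝ) else if (t : ℕ) = 1 then (0.6262 : ℝ) else (0.4655 : ℝ))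
      (fun t : Fin 3 => if (t : ℕ) = 0 then (0.8423 : ℝ) else if (t : ℕ) = 1 then (0.6694 : ℝ) else (1 : ℝ))
      (fun t : Fin 3 => if (t : ℕ) = 0 then (0.769 : ℝ) else if (t : ℕ) = 1 then (0.6262 : ℝ) else (0.4655 : ℝ))
      (by norm_num) (by norm_num) (by norm_num) (by norm_num)
      (by intro t; first | (split_ifs <;> norm_num) | norm_num) (by intro t; first | (split_ifs <;> norm_num) | norm_num)
      (by intro t; first | (split_ifs <;> norm_num) | norm_num) (by intro t; first | (split_ifs <;> norm_num) | norm_num)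
      (by intro t; first | (split_ifs <;> norm_num) | norm_num) (by intro t; first | (split_ifs <;> norm_num) | norm_num)
      (by intro t; first | (split_ifs <;> norm_num) | norm_num) (by intro t; first | (split_ifs <;> norm_num) | norm_num)
    norm_num [DaggerAux.pathN, DaggerAux.pathD, Fin.sum_univ_succ, Nat.factorial] at hb
    refine lt_of_lt_of_le (DaggerAux.threshold_lt _ (by norm_num) ?_) hb
    rw [← lt_sub_iff_add_lt']
    exact (Real.sqrt_lt' (by norm_num)).2 (by norm_num)
  · simp only [Prod.mk.injEq] at h
    obtain ⟨rfl, rfl, rfl, rfl⟩ := h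
    have hb := DaggerAux.dagger_bound H hd (0.9479 : ℝ) 0.9479 0.9933 0.9933
      (fun _ : Fin 1 => (1 : ℝ))
      (fun _ : Fin 1 => (0.6602 : ℝ))
      (fun _ : Fin 1 => (1 : ℝ))
      (fun _ : Fin 1 => (0.6602 : ℝ))
      (fun t : Fin 5 => if (t : ℕ) = 0 then (0.8624 : ℝ) else if (t : ℕ) = 1 then (0.7393 : ℝ) else if (t : ℕ) = 2 then (0.6188 : ℝ) else if (t : ℕ) = 3 then (0.4929 : ℝ) else (1 : ℝ))
      (fun t : Fin 5 => if (t : ℕ) = 0 then (0.7724 : ℝ) else if (t : ℕ) = 1 then (0.6663 : ℝ) else if (t : ℕ) = 2 then (0.5645 : ℝ) else if (t : ℕ) = 3 then (0.4609 : ℝ) else (0.3433 : ℝ))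
      (fun t : Fin 5 => if (t : ℕ) = 0 then (0.8624 : ℝ) else if (t : ℕ) = 1 then (0.7393 : ℝ) else if (t : ℕ) = 2 then (0.6188 : ℝ) else if (t : ℕ) = 3 then (0.4929 : ℝ) else (1 : ℝ))
      (fun t : Fin 5 => if (t : ℕ) = 0 then (0.7724 : ℝ) else if (t : ℕ) = 1 then (0.6663 : ℝ) else if (t : ℕ) = 2 then (0.5645 : ℝ) else if (t : ℕ) = 3 then (0.4609 : ℝ) else (0.3433 : ℝ))
      (by norm_num) (by norm_num) (by norm_num) (by norm_num)
      (by intro t; first | (split_ifs <;> norm_num) | norm_num) (by intro t; first | (split_ifs <;> norm_num) | norm_num)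
      (by intro t; first | (split_ifs <;> norm_num) | norm_num) (by intro t; first | (split_ifs <;> norm_num) | norm_num)
      (by intro t; first | (split_ifs <;> norm_num) | norm_num) (by intro t; first | (split_ifs <;> norm_num) | norm_num)
      (by intro t; first | (split_ifs <;> norm_num) | norm_num) (by intro t; first | (split_ifs <;> norm_num) | norm_num)
    norm_num [DaggerAux.pathN, DaggerAux.pathD, Fin.sum_univ_succ, Nat.factorial] at hb
    refine lt_of_lt_of_le (DaggerAux.threshold_lt _ (by norm_num) ?_) hb
    rw [← lt_sub_iff_add_lt']
    exact (Real.sqrt_lt' (by norm_num)).2 (by norm_num)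
  · simp only [Prod.mk.injEq] at h
    obtain ⟨rfl, rfl, rfl, rfl⟩ := h
    have hb := DaggerAux.dagger_bound H hd (0.9496 : ℝ) 0.9496 0.9917 0.9975
      (fun _ : Fin 1 => (1 : ℝ))
      (fun _ : Fin 1 => (0.6616 : ℝ))
      (fun _ : Fin 1 => (1 : ℝ))
      (fun _ : Fin 1 => (0.6616 : ℝ))
      (fun t : Fin 4 => if (t : ℕ) = 0 then (0.851 : ℝ) else if (t : ℕ) = 1 then (0.7129 : ℝ) else if (t : ℕ) = 2 then (0.5682 : ℝ) else (1 : ℝ))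
      (fun t : Fin 4 => if (t : ℕ) = 0 then (0.7668 : ℝ) else if (t : ℕ) = 1 then (0.6502 : ℝ) else if (t : ℕ) = 2 then (0.5313 : ℝ) else (0.3959 : ℝ))
      (fun t : Fin 6 => if (t : ℕ) = 0 then (0.8734 : ℝ) else if (t : ℕ) = 1 then (0.7591 : ℝ) else if (t : ℕ) = 2 then (0.6514 : ℝ) else if (t : ℕ) = 3 then (0.5458 : ℝ) else if (t : ℕ) = 4 then (0.4349 : ℝ) else (1 : ℝ))
      (fun t : Fin 6 => if (t : ℕ) = 0 then (0.7791 : ℝ) else if (t : ℕ) = 1 then (0.6797 : ℝ) else if (t : ℕ) = 2 then (0.587 : ℝ) else if (t : ℕ) = 3 then (0.4977 : ℝ) else if (t : ℕ) = 4 then (0.4067 : ℝ) else (0.303 : ℝ))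
      (by norm_num) (by norm_num) (by norm_num) (by norm_num)
      (by intro t; first | (split_ifs <;> norm_num) | norm_num) (by intro t; first | (split_ifs <;> norm_num) | norm_num)
      (by intro t; first | (split_ifs <;> norm_num) | norm_num) (by intro t; first | (split_ifs <;> norm_num) | norm_num)
      (by intro t; first | (split_ifs <;> norm_num) | norm_num) (by intro t; first | (split_ifs <;> norm_num) | norm_num)
      (by intro t; first | (split_ifs <;> norm_num) | norm_num) (by intro t; first | (split_ifs <;> norm_num) | norm_num)
    norm_num [DaggerAux.pathN, DaggerAux.pathD, Fin.sum_univ_succ, Nat.factorial] at hb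
    refine lt_of_lt_of_le (DaggerAux.threshold_lt _ (by norm_num) ?_) hb
    rw [← lt_sub_iff_add_lt']
    exact (Real.sqrt_lt' (by norm_num)).2 (by norm_num)
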